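/- arXiv:1603.00051 — 8 statements merged into one kernel-verified Lean document; each statement's English description precedes it below -/
import Mathlib

section
/- Let V ⊆ Z^n be finite and L ⊆ Z^n be such that {V + l : l ∈ L} tiles Z^n. Let p be a prime not dividing |V|. Then {pV + l : l ∈ L} is also a tiling of Z^n, where pV = {pv : v ∈ V}. -/
/-- A tiling of `ℤ^n` by translates of `V` with translate set `L`:
every point has a unique representation `v + l` with `v ∈ V`, `l ∈ L`. -/
def IsTiling {n : ℕ} (V L : Set (Fin n → ℤ)) : Prop :=
  ∀ x : Fin n → ℤ, ∃! p : (Fin n → ℤ) × (Fin n → ℤ),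
    p.1 ∈ V ∧ p.2 ∈ L ∧ p.1 + p.2 = x

/-!
Write `N_f(x) = #{v ∈ V | x - f v ∈ L}`; the tiling hypothesis says `N_id ≡ 1`.

Existence (`N_{p•} ≥ 1`): the cyclic group `ZMod p` rotates the `p`-tuples `(v_i)` of elements
of `V` with `x - ∑ v_i ∈ L`. There are `#V ^ (p - 1)` of them, since all entries but one are free
and the tiling forces the last one. This is prime to `p`, so some tuple is fixed by the rotation,
i.e. constant, and then `x - p • v ∈ L`.

Uniqueness: for `u₀ ∈ V` and `c = x + u₀`, the sum of `N_f(c - u)` over `u ∈ V` counts the pairs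
`(u, v)` with `(c - f v) - u ∈ L`, hence equals `∑_v N_id(c - f v) = #V`. Every term is at least
one, so all are one, in particular `N_f(x) = N_f(c - u₀)`.
-/

open Finset

theorem Finset.natCard_subtype_eq_card_filter {α : Type*} (s : Finset α) (q : α → Prop)
    [DecidablePred q] : Nat.card {a : s // q a} = #{a ∈ s | q a} := by
  rw [← Nat.card_eq_finsetCard]
  exact Nat.card_congr ((Equiv.subtypeSubtypeEquivSubtypeInter (· ∈ s) q).trans
    (Equiv.subtypeEquivRight fun _ => mem_filter.symm))

section Rotation

variable {p : ℕ} {α : Type*}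

def rotateTuple (p : ℕ) (α : Type*) : Equiv.Perm (ZMod p → α) where
  toFun f i := f (i + 1)
  invFun f i := f (i - 1)
  left_inv f := by simp
  right_inv f := by simp

theorem rotateTuple_pow_apply (k : ℕ) (f : ZMod p → α) :
    (rotateTuple p α ^ k) f = fun i => f (i + k) := by
  induction k with
  | zero => simp
  | succ k ih =>
    rw [pow_succ', Equiv.Perm.mul_apply, ih]
    funext i
    simp [rotateTuple, add_assoc, add_comm (1 : ZMod p)]

theorem rotateTuple_pow_self : rotateTuple p α ^ p = 1 := by
  ext f i
  simp [rotateTuple_pow_apply]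

theorem exists_const_of_rotateTuple_invariant [Fact p.Prime] [Finite α]
    {P : (ZMod p → α) → Prop} (hP : ∀ f, P (rotateTuple p α f) ↔ P f)
    (hcard : ¬ p ∣ Nat.card {f // P f}) : ∃ a, P fun _ => a := by
  classical
  have := Fintype.ofFinite α
  obtain ⟨⟨f, hf⟩, hfix⟩ := Equiv.Perm.exists_fixed_point_of_prime (n := 1)
    (σ := (rotateTuple p α).subtypePerm hP) (by rwa [← Nat.card_eq_fintype_card])
    (by rw [pow_one, Equiv.Perm.subtypePerm_pow]; ext; simp [rotateTuple_pow_self])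
  have hrot : rotateTuple p α f = f := congrArg Subtype.val hfix
  refine ⟨f 0, ?_⟩
  convert hf using 1
  funext i
  have hperiodic := Equiv.Perm.pow_apply_eq_self_of_apply_eq_self hrot i.val
  simpa [rotateTuple_pow_apply] using (congrFun hperiodic 0).symm

end Rotation

section Tiling

variable {G : Type*} [AddCommGroup G] {V : Finset G} {L : Set G} [DecidablePred (· ∈ L)]

theorem natCard_tuples_sub_sum_mem {ι : Type*} [Fintype ι] [DecidableEq ι] (i₀ : ι)
    (htile : ∀ y, #{v ∈ V | y - v ∈ L} = 1) (x : G) :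
    Nat.card {f : ι → V // x - ∑ i, (f i : G) ∈ L} = #V ^ (Fintype.card ι - 1) := by
  calc Nat.card {f : ι → V // x - ∑ i, (f i : G) ∈ L}
      = Nat.card {q : ({j // j ≠ i₀} → V) × V // (x - ∑ j, (q.1 j : G)) - q.2 ∈ L} :=
        Nat.card_congr <| ((Equiv.funSplitAt i₀ V).trans (Equiv.prodComm _ _)).subtypeEquiv
          fun f => by simp [Fintype.sum_eq_add_sum_subtype_ne _ i₀, sub_add_eq_sub_sub_swap]
    _ = ∑ g : {j // j ≠ i₀} → V, Nat.card {a : V // (x - ∑ j, (g j : G)) - a ∈ L} := by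
        rw [← Nat.card_sigma]
        exact Nat.card_congr (Equiv.subtypeProdEquivSigmaSubtype
          fun (g : {j // j ≠ i₀} → V) (a : V) => (x - ∑ j, (g j : G)) - a ∈ L)
    _ = ∑ _g : {j // j ≠ i₀} → V, 1 := Fintype.sum_congr _ _ fun g =>
        (natCard_subtype_eq_card_filter V fun v => (x - ∑ j, (g j : G)) - v ∈ L).trans (htile _)
    _ = #V ^ (Fintype.card ι - 1) := by
        simp [Fintype.card_subtype_compl]

theorem exists_mem_sub_nsmul_mem {p : ℕ} [Fact p.Prime] (htile : ∀ y, #{v ∈ V | y - v ∈ L} = 1)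
    (hpV : ¬ p ∣ #V) (x : G) : ∃ v ∈ V, x - p • v ∈ L := by
  obtain ⟨a, ha⟩ := exists_const_of_rotateTuple_invariant
    (P := fun f : ZMod p → V => x - ∑ i, (f i : G) ∈ L)
    (fun f => by
      rw [show ∑ i, (rotateTuple p V f i : G) = ∑ i, (f i : G) from
        Fintype.sum_equiv (Equiv.addRight 1) _ _ fun _ => rfl])
    (by rw [natCard_tuples_sub_sum_mem 0 htile, ZMod.card]
        exact fun h => hpV (Nat.Prime.dvd_of_dvd_pow Fact.out h))
  exact ⟨a, a.2, by simpa using ha⟩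

theorem card_filter_sub_apply_mem_eq_one (htile : ∀ y, #{v ∈ V | y - v ∈ L} = 1) (f : G → G)
    (hcover : ∀ y, ∃ v ∈ V, y - f v ∈ L) (y : G) : #{v ∈ V | y - f v ∈ L} = 1 := by
  obtain ⟨u₀, hu₀⟩ : V.Nonempty := (card_pos.mp (htile 0 ▸ one_pos)).mono (filter_subset _ _)
  set c := y + u₀
  have hsum : ∑ u ∈ V, #{v ∈ V | (c - u) - f v ∈ L} = ∑ _u ∈ V, 1 := calc
    ∑ u ∈ V, #{v ∈ V | (c - u) - f v ∈ L}
        = ∑ v ∈ V, #{u ∈ V | (c - f v) - u ∈ L} := by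
          simp only [card_filter, sub_right_comm c]
          exact sum_comm
    _ = ∑ _u ∈ V, 1 := sum_congr rfl fun v _ => htile _
  have hpos : ∀ u ∈ V, 1 ≤ #{v ∈ V | (c - u) - f v ∈ L} := fun u _ => by
    obtain ⟨v, hv, hvL⟩ := hcover (c - u)
    exact card_pos.mpr ⟨v, mem_filter.mpr ⟨hv, hvL⟩⟩
  have hc : c - u₀ = y := add_sub_cancel_right y u₀
  rw [← hc]
  exact ((sum_eq_sum_iff_of_le hpos).mp hsum.symm u₀ hu₀).symm

end Tiling

section IntegerLattice

variable {n : ℕ} {V : Finset (Fin n → ℤ)} {L : Set (Fin n → ℤ)} [DecidablePred (· ∈ L)]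

theorem IsTiling.card_filter_sub_mem_eq_one (hT : IsTiling (↑V) L) (x : Fin n → ℤ) :
    #{v ∈ V | x - v ∈ L} = 1 := by
  obtain ⟨⟨v, l⟩, ⟨hv, hl, rfl⟩, huniq⟩ := hT x
  refine card_eq_one.mpr ⟨v, eq_singleton_iff_unique_mem.mpr ⟨?_, fun u hu => ?_⟩⟩
  · simpa using And.intro hv hl
  · rw [mem_filter] at hu
    exact congrArg Prod.fst (huniq (u, v + l - u) ⟨hu.1, hu.2, add_sub_cancel _ _⟩)

theorem isTiling_image_of_card_filter_sub_apply_mem_eq_one (f : (Fin n → ℤ) → Fin n → ℤ)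
    (h : ∀ x, #{v ∈ V | x - f v ∈ L} = 1) : IsTiling (f '' ↑V) L := by
  intro x
  obtain ⟨v, hv⟩ := card_eq_one.mp (h x)
  have hvmem := mem_filter.mp (hv ▸ mem_singleton_self v)
  refine ⟨(f v, x - f v), ⟨⟨v, hvmem.1, rfl⟩, hvmem.2, add_sub_cancel _ _⟩, ?_⟩
  rintro ⟨_, l⟩ ⟨⟨w, hw, rfl⟩, hl, rfl⟩
  have hwv : w = v := mem_singleton.mp <| hv ▸ mem_filter.mpr ⟨hw, by simpa using hl⟩
  simp [hwv]

end IntegerLattice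

theorem stmt_1 {n : ℕ} (V : Finset (Fin n → ℤ)) (L : Set (Fin n → ℤ))
    (hT : IsTiling (↑V) L) (p : ℕ) (hp : p.Prime) (hpV : ¬ p ∣ V.card) :
    IsTiling ((fun v => (p : ℤ) • v) '' ↑V) L := by
  classical
  have : Fact p.Prime := ⟨hp⟩
  have htile := hT.card_filter_sub_mem_eq_one
  refine isTiling_image_of_card_filter_sub_apply_mem_eq_one _
    (card_filter_sub_apply_mem_eq_one htile _ fun x => ?_)
  simpa only [natCast_zsmul] using exists_mem_sub_nsmul_mem htile hpV x
end

section
/- Let V ⊆ Z^n be finite and L ⊆ Z^n be such that {V + l : l ∈ L} tiles Z^n. Then {(-V) + l : l ∈ L} is also a tiling of Z^n, where -V = {-v : v ∈ V}. -/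
/-!
Write `N(y)` for the number of `v ∈ V` with `y + v ∈ L`; the tiling property of `-V` is `N ≡ 1`.
The tiling hypothesis says that every `x` has exactly one `v ∈ V` with `x - v ∈ L`. This gives
`N(y) ≤ 1`: if `y + v` and `y + w` both lie in `L`, then `v` and `w` both represent `y + v + w`.
Counting the pairs `(u, w) ∈ V × V` with `x - u + w ∈ L` by `w` gives `∑_{u ∈ V} N(x - u) = |V|`,
so `N(x - u) = 1` for every `u ∈ V`; taking `x = y + u` for some `u ∈ V` gives `N(y) = 1`.
-/

open Finset

section Packing

variable {G : Type*} [AddCommGroup G] {V : Finset G} {L : Set G} [DecidablePred (· ∈ L)]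

theorem card_filter_add_mem_le_one (hV : ∀ x, #{v ∈ V | x - v ∈ L} = 1) (y : G) :
    #{v ∈ V | y + v ∈ L} ≤ 1 := by
  refine card_le_one.mpr fun v hv w hw => ?_
  rw [mem_filter] at hv hw
  refine card_le_one.mp (hV (y + v + w)).le v ?_ w ?_
  · simpa [add_sub_assoc, hv.1, add_comm] using hw.2
  · simpa [hw.1] using hv.2

theorem card_filter_add_mem_eq_one (hV : ∀ x, #{v ∈ V | x - v ∈ L} = 1) (y : G) :
    #{v ∈ V | y + v ∈ L} = 1 := by
  obtain ⟨v₀, hv₀⟩ : V.Nonempty :=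
    (card_pos.mp (by rw [hV 0]; exact one_pos)).mono (filter_subset _ _)
  let r : G → G → Prop := fun u w => y + v₀ - u + w ∈ L
  have hcount : ∑ u ∈ V, #(V.bipartiteAbove r u) = ∑ _u ∈ V, 1 := by
    rw [sum_card_bipartiteAbove_eq_sum_card_bipartiteBelow]
    refine sum_congr rfl fun w _ => ?_
    simpa [bipartiteBelow, r, sub_add_eq_add_sub] using hV (y + v₀ + w)
  have := (sum_eq_sum_iff_of_le fun u _ => card_filter_add_mem_le_one hV (y + v₀ - u)).mp
    hcount v₀ hv₀
  simpa [bipartiteAbove, r] using this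

end Packing

theorem isTiling_iff_card_filter_sub_mem {n : ℕ} (V : Finset (Fin n → ℤ))
    (L : Set (Fin n → ℤ)) [DecidablePred (· ∈ L)] :
    IsTiling (V : Set (Fin n → ℤ)) L ↔ ∀ x, #{v ∈ V | x - v ∈ L} = 1 := by
  refine forall_congr' fun x => ?_
  rw [card_eq_one_iff_existsUnique]
  constructor
  · rintro ⟨⟨v, l⟩, ⟨hv, hl, rfl⟩, huniq⟩
    refine ⟨v, mem_filter.mpr ⟨hv, by simpa⟩, fun w hw => ?_⟩
    replace hw := mem_filter.mp hw
    exact congrArg Prod.fst (huniq (w, v + l - w) ⟨hw.1, hw.2, add_sub_cancel _ _⟩)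
  · rintro ⟨v, hv, huniq⟩
    rw [mem_filter] at hv
    refine ⟨(v, x - v), ⟨hv.1, hv.2, add_sub_cancel _ _⟩, ?_⟩
    rintro ⟨w, l⟩ ⟨hw, hl, rfl⟩
    obtain rfl := huniq w (mem_filter.mpr ⟨hw, by simpa⟩)
    simp

theorem stmt_2 {n : ℕ} (V : Finset (Fin n → ℤ)) (L : Set (Fin n → ℤ))
    (hT : IsTiling (↑V) L) :
    IsTiling ((fun v => -v) '' ↑V) L := by
  classical
  rw [← coe_image, isTiling_iff_card_filter_sub_mem] at *
  intro x
  rw [filter_image, card_image_of_injective _ neg_injective]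
  simpa [Function.comp_def, sub_neg_eq_add] using card_filter_add_mem_eq_one (V := V) (L := L) hT x
end

section
/- Let V ⊆ Z^n be finite and L ⊆ Z^n be such that {V + l : l ∈ L} tiles Z^n, and let a be an integer relatively prime to |V|. Then {aV + l : l ∈ L} is a tiling of Z^n by translates of the blow-up tile aV = {av : v ∈ V}. -/
open AddMonoidAlgebra Finset
open scoped Classical

variable {G : Type*} [AddCommGroup G]

noncomputable def repCount (W : Finset G) (L : Set G) (x : G) : ℕ :=
  #{w ∈ W | x - w ∈ L}

theorem isTiling_iff_repCount_eq_one {n : ℕ} {V : Finset (Fin n → ℤ)} {L : Set (Fin n → ℤ)} :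
    IsTiling (↑V) L ↔ ∀ x, repCount V L x = 1 := by
  refine forall_congr' fun x => ?_
  simp only [repCount, card_eq_one_iff_existsUnique, mem_filter]
  constructor
  · rintro ⟨⟨v, l⟩, ⟨hv, hl, rfl⟩, huniq⟩
    refine ⟨v, ⟨hv, by simpa using hl⟩, fun w ⟨hw, hwl⟩ => ?_⟩
    exact congrArg Prod.fst (huniq (w, v + l - w) ⟨hw, hwl, add_sub_cancel _ _⟩)
  · rintro ⟨v, ⟨hv, hvl⟩, huniq⟩
    refine ⟨(v, x - v), ⟨hv, hvl, add_sub_cancel _ _⟩, fun ⟨w, l⟩ ⟨hw, hl, hwl⟩ => ?_⟩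
    obtain rfl : w = v := huniq w ⟨hw, by simpa [← hwl] using hl⟩
    simp [← hwl]

variable {V W : Finset G} {L : Set G}

theorem nonempty_of_repCount_eq_one (hV : ∀ x, repCount V L x = 1) : V.Nonempty :=
  (card_pos.1 ((hV 0).symm ▸ one_pos)).mono (filter_subset _ _)

theorem sum_repCount_sub (hV : ∀ x, repCount V L x = 1) (W : Finset G) (x : G) :
    ∑ v ∈ V, repCount W L (x - v) = #W := calc
  ∑ v ∈ V, repCount W L (x - v) = ∑ v ∈ V, ∑ w ∈ W, if x - v - w ∈ L then 1 else 0 := by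
    simp only [repCount, card_filter]
  _ = ∑ w ∈ W, ∑ v ∈ V, if x - w - v ∈ L then 1 else 0 := by
    rw [sum_comm]; simp only [sub_right_comm]
  _ = ∑ w ∈ W, repCount V L (x - w) := by simp only [repCount, card_filter]
  _ = #W := by simp [hV]

theorem card_eq_of_repCount_eq_one (hV : ∀ x, repCount V L x = 1)
    (hW : ∀ x, repCount W L x = 1) : #W = #V := by
  rw [← sum_repCount_sub hV W 0]
  simp [hW]

theorem repCount_eq_one_of_forall_le_one (hV : ∀ x, repCount V L x = 1) (hWV : #W = #V)
    (hW : ∀ x, repCount W L x ≤ 1) (x : G) : repCount W L x = 1 := by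
  obtain ⟨v₀, hv₀⟩ := nonempty_of_repCount_eq_one hV
  have hsum := (sum_eq_sum_iff_of_le fun v _ => hW (x + v₀ - v)).1
    (by rw [sum_repCount_sub hV, hWV, sum_const, smul_eq_mul, mul_one])
  simpa using hsum v₀ hv₀

theorem repCount_eq_one_of_forall_one_le (hV : ∀ x, repCount V L x = 1) (hWV : #W = #V)
    (hW : ∀ x, 1 ≤ repCount W L x) (x : G) : repCount W L x = 1 := by
  obtain ⟨v₀, hv₀⟩ := nonempty_of_repCount_eq_one hV
  have hsum := (sum_eq_sum_iff_of_le fun v _ => hW (x + v₀ - v)).1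
    (by rw [sum_repCount_sub hV, hWV, sum_const, smul_eq_mul, mul_one])
  simpa using (hsum v₀ hv₀).symm

section MaskPolynomial
variable (R : Type*) [CommSemiring R]

noncomputable def maskPoly (W : Finset G) : R[G] :=
  ∑ w ∈ W, single w 1

noncomputable def repFunctional (L : Set G) (x : G) : R[G] →+ R :=
  liftNC (AddMonoidHom.id R) fun y => if x - y.toAdd ∈ L then 1 else 0

variable {R}

theorem repFunctional_single (x y : G) (r : R) :
    repFunctional R L x (single y r) = r * if x - y ∈ L then 1 else 0 :=
  liftNC_single _ _ _ _

theorem repFunctional_maskPoly (x : G) :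
    repFunctional R L x (maskPoly R W) = repCount W L x := by
  rw [repCount, natCast_card_filter, maskPoly, map_sum]
  simp only [repFunctional_single, one_mul]

theorem lift_one_maskPoly : lift R R G 1 (maskPoly R W) = #W := by
  simp [maskPoly, lift_single]

theorem repFunctional_maskPoly_mul (hV : ∀ x, repCount V L x = 1) (x : G) (f : R[G]) :
    repFunctional R L x (maskPoly R V * f) = lift R R G 1 f := by
  induction f using induction_linear with
  | zero => simp
  | add f g hf hg => rw [mul_add, map_add, map_add, hf, hg]
  | single u r =>
    have hrep : (∑ v ∈ V, if x - u - v ∈ L then 1 else 0 : R) = 1 := by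
      rw [← natCast_card_filter, ← repCount, hV, Nat.cast_one]
    simp only [maskPoly, sum_mul, single_mul_single, one_mul, map_sum, repFunctional_single,
      lift_single, ← mul_sum, sub_add_eq_sub_sub_swap, hrep]
    simp

end MaskPolynomial

section DecidableEq
variable [DecidableEq G]

theorem repCount_image_neg_le_one (hV : ∀ x, repCount V L x = 1) (x : G) :
    repCount (V.image Neg.neg) L x ≤ 1 := by
  rw [repCount, filter_image]
  refine card_image_le.trans (card_le_one.2 fun v₁ h₁ v₂ h₂ => ?_)
  simp only [mem_filter, sub_neg_eq_add] at h₁ h₂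
  refine card_le_one.1 (hV (x + v₁ + v₂)).le v₁ ?_ v₂ ?_ <;> simp only [mem_filter]
  · exact ⟨h₁.1, by rw [add_right_comm, add_sub_cancel_right]; exact h₂.2⟩
  · exact ⟨h₂.1, by simpa using h₁.2⟩

theorem repCount_image_neg_eq_one (hV : ∀ x, repCount V L x = 1) (x : G) :
    repCount (V.image Neg.neg) L x = 1 :=
  repCount_eq_one_of_forall_le_one hV (card_image_of_injective _ neg_injective)
    (repCount_image_neg_le_one hV) x

variable [IsAddTorsionFree G]

theorem maskPoly_pow_char {R : Type*} [CommRing R] (p : ℕ)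
    [Fact p.Prime] [CharP R p] : maskPoly R W ^ p = maskPoly R (W.image ((p : ℤ) • ·)) := by
  have := charP_of_injective_algebraMap' R (A := R[G]) p
  rw [maskPoly, maskPoly, sum_pow_char, sum_image]
  · simp [single_pow]
  · exact (zsmul_right_injective (by exact_mod_cast (Fact.out : p.Prime).ne_zero)).injOn

theorem natCast_repCount_image_prime_smul_eq_one (hV : ∀ x, repCount V L x = 1) {p : ℕ}
    [Fact p.Prime] (hp : ¬p ∣ #V) (x : G) : (repCount (V.image ((p : ℤ) • ·)) L x : ZMod p) = 1 := calc
  (repCount (V.image ((p : ℤ) • ·)) L x : ZMod p)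
      = repFunctional (ZMod p) L x (maskPoly (ZMod p) V * maskPoly (ZMod p) V ^ (p - 1)) := by
    rw [← pow_succ', Nat.sub_add_cancel (Fact.out : p.Prime).one_le, maskPoly_pow_char,
      repFunctional_maskPoly]
  _ = (#V : ZMod p) ^ (p - 1) := by rw [repFunctional_maskPoly_mul hV, map_pow, lift_one_maskPoly]
  _ = 1 := ZMod.pow_card_sub_one_eq_one (by rwa [Ne, ZMod.natCast_eq_zero_iff])

theorem repCount_image_prime_smul_eq_one (hV : ∀ x, repCount V L x = 1) {p : ℕ} (hp : p.Prime)
    (hpV : ¬p ∣ #V) (x : G) : repCount (V.image ((p : ℤ) • ·)) L x = 1 := by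
  have := Fact.mk hp
  refine repCount_eq_one_of_forall_one_le hV ?_ (fun y => Nat.one_le_iff_ne_zero.2 fun h => ?_) x
  · exact card_image_of_injective _ (zsmul_right_injective (by exact_mod_cast hp.ne_zero))
  · have hcast := natCast_repCount_image_prime_smul_eq_one hV hpV y
    rw [h, Nat.cast_zero] at hcast
    exact zero_ne_one hcast

theorem repCount_image_natCast_smul_eq_one (hV : ∀ x, repCount V L x = 1) {b : ℕ}
    (hb : b.Coprime #V) (x : G) : repCount (V.image ((b : ℤ) • ·)) L x = 1 := by
  induction b using induction_on_primes generalizing V x with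
  | zero =>
    have himage : V.image (((0 : ℕ) : ℤ) • ·) = {0} := by
      simpa using image_const (nonempty_of_repCount_eq_one hV) (0 : G)
    refine repCount_eq_one_of_forall_le_one hV ?_ (fun y => (card_filter_le _ _).trans ?_) x
    · rw [himage, card_singleton, (Nat.coprime_zero_left _).1 hb]
    · rw [himage, card_singleton]
  | one => simpa using hV x
  | prime_mul p b hp ih =>
    have hbV := fun y => ih hV (Nat.Coprime.coprime_mul_left hb) y
    have hpV : ¬p ∣ #(V.image ((b : ℤ) • ·)) := by
      rw [card_eq_of_repCount_eq_one hV hbV]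
      exact (Nat.Prime.coprime_iff_not_dvd hp).1 (Nat.Coprime.coprime_mul_right hb)
    have hpbV := repCount_image_prime_smul_eq_one hbV hp hpV x
    simpa only [image_image, Function.comp_def, smul_smul, Nat.cast_mul] using hpbV

theorem repCount_image_smul_eq_one (hV : ∀ x, repCount V L x = 1) {a : ℤ}
    (ha : IsCoprime a #V) (x : G) : repCount (V.image (a • ·)) L x = 1 := by
  obtain ⟨b, rfl | rfl⟩ := Int.eq_nat_or_neg a
  · exact repCount_image_natCast_smul_eq_one hV (Nat.isCoprime_iff_coprime.1 ha) x
  · have hbV := repCount_image_natCast_smul_eq_one hV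
      (Nat.isCoprime_iff_coprime.1 (IsCoprime.neg_left_iff _ _ |>.1 ha))
    have hnegbV := repCount_image_neg_eq_one hbV x
    simpa only [image_image, Function.comp_def, neg_smul] using hnegbV

end DecidableEq

theorem stmt_3 {n : ℕ} (V : Finset (Fin n → ℤ)) (L : Set (Fin n → ℤ))
    (hT : IsTiling (↑V) L) (a : ℤ) (ha : IsCoprime a (V.card : ℤ)) :
    IsTiling ((fun v => a • v) '' ↑V) L := by
  rw [← coe_image, isTiling_iff_repCount_eq_one]
  exact repCount_image_smul_eq_one (isTiling_iff_repCount_eq_one.1 hT) ha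
end

section
/- Let V ⊆ Z^n be finite and L ⊆ Z^n be such that {V + l : l ∈ L} tiles Z^n, and let a be an integer relatively prime to |V|. Then for every l ∈ L and every v, w ∈ V, the point l + a(v - w) is not in L unless v = w. -/
open Finset AddMonoidAlgebra

section ConvEval

variable {R G : Type*} [CommSemiring R] [AddCommGroup G]

/-- `(f * w)(x) = ∑ z, f z * w (x - z)` for `f ∈ R[G]` and an arbitrary `w : G → R`. -/
noncomputable def convEval (w : G → R) (x : G) : R[G] →ₗ[R] R :=
  Finsupp.linearCombination R (fun z => w (x - z)) ∘ₗ (coeffLinearEquiv R).toLinearMap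

lemma convEval_single (w : G → R) (x z : G) (c : R) :
    convEval w x (single z c) = c * w (x - z) := by
  simp [convEval]

lemma convEval_single_mul (w : G → R) (x z : G) (c : R) (f : R[G]) :
    convEval w x (single z c * f) = c * convEval w (x - z) f := by
  induction f using induction_linear with
  | zero => simp
  | add f g hf hg => rw [mul_add, map_add, map_add, hf, hg, mul_add]
  | single z' c' => rw [single_mul_single, convEval_single, convEval_single, sub_sub, mul_assoc]

/-- `lift R R G 1` is the augmentation `∑ c_z δ_z ↦ ∑ c_z`. -/
lemma convEval_mul_of_forall_eq {w : G → R} {f : R[G]} {C : R} (hf : ∀ y, convEval w y f = C)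
    (x : G) (g : R[G]) :
    convEval w x (g * f) = lift R R G 1 g * C := by
  induction g using induction_linear with
  | zero => simp
  | add g g' hg hg' => rw [add_mul, map_add, map_add, hg, hg', add_mul]
  | single z c => simp [convEval_single_mul, hf]

end ConvEval

section DilatedTiling

variable {G : Type*} [AddCommGroup G] {V : Finset G} {L : Set G} {s : ℤ}

open Classical in
noncomputable def dilatedCount (V : Finset G) (L : Set G) (s : ℤ) (x : G) : ℕ :=
  #{v ∈ V | x - s • v ∈ L}

/-- `s • V ⊕ L = G`, where the translates `s • v + L` are counted with multiplicity, so that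
distinct `v` with equal `s • v` already spoil the tiling. -/
def IsDilatedTiling (V : Finset G) (L : Set G) (s : ℤ) : Prop :=
  ∀ x, dilatedCount V L s x = 1

lemma natCast_dilatedCount {R : Type*} [CommSemiring R] (x : G) :
    (dilatedCount V L s x : R) =
      convEval (L.indicator 1) x (∑ v ∈ V, single (s • v) (1 : R)) := by
  classical
  rw [dilatedCount, card_filter, map_sum, Nat.cast_sum]
  refine sum_congr rfl fun v _ => ?_
  rw [convEval_single, one_mul, Set.indicator_apply]
  split_ifs <;> simp

lemma IsDilatedTiling.natCast_dilatedCount_prime_mul (hs : IsDilatedTiling V L s) {p : ℕ}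
    [hp : Fact p.Prime] (x : G) :
    (dilatedCount V L (p * s) x : ZMod p) = (#V : ZMod p) ^ (p - 1) := by
  have : CharP (ZMod p)[G] p := charP_of_injective_algebraMap' (ZMod p) p
  set f : (ZMod p)[G] := ∑ v ∈ V, single (s • v) 1
  have hfrob : f ^ p = ∑ v ∈ V, single (((p : ℤ) * s) • v) 1 := by
    simp only [f, sum_pow_char, single_pow, one_pow, mul_smul, natCast_zsmul]
  have hf : ∀ y, convEval (L.indicator 1) y f = 1 := fun y => by
    rw [← natCast_dilatedCount, hs y, Nat.cast_one]
  have hε : lift (ZMod p) (ZMod p) G 1 f = #V := by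
    simp [f, lift_single]
  rw [natCast_dilatedCount, ← hfrob, ← pow_sub_one_mul hp.out.ne_zero,
    convEval_mul_of_forall_eq hf, map_pow, hε, mul_one]

lemma IsDilatedTiling.sum_dilatedCount_sub (hs : IsDilatedTiling V L s) (t : ℤ) (x : G) :
    ∑ u ∈ V, dilatedCount V L t (x - s • u) = #V := by
  classical
  calc ∑ u ∈ V, dilatedCount V L t (x - s • u)
      = ∑ v ∈ V, ∑ u ∈ V, if x - t • v - s • u ∈ L then 1 else 0 := by
        simp only [dilatedCount, card_filter]
        rw [sum_comm]
        simp only [sub_right_comm]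
    _ = ∑ v ∈ V, dilatedCount V L s (x - t • v) := by
        simp only [dilatedCount, card_filter]
    _ = #V := by simp [hs _]

lemma IsDilatedTiling.of_one_le_dilatedCount {t : ℤ} (hs : IsDilatedTiling V L s)
    (ht : ∀ x, 1 ≤ dilatedCount V L t x) :
    IsDilatedTiling V L t := by
  classical
  intro x
  obtain ⟨u, hu⟩ : V.Nonempty := (card_pos.mp (ht x)).mono (filter_subset _ _)
  have hsum : ∑ _v ∈ V, 1 = ∑ v ∈ V, dilatedCount V L t (x + s • u - s • v) := by
    rw [hs.sum_dilatedCount_sub, sum_const, smul_eq_mul, mul_one]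
  have := (sum_eq_sum_iff_of_le fun v _ => ht (x + s • u - s • v)).mp hsum u hu
  rwa [add_sub_cancel_right, eq_comm] at this

lemma IsDilatedTiling.prime_mul (hs : IsDilatedTiling V L s) {p : ℕ} (hp : p.Prime)
    (hpV : ¬p ∣ #V) :
    IsDilatedTiling V L (p * s) := by
  have := Fact.mk hp
  refine hs.of_one_le_dilatedCount fun x => Nat.one_le_iff_ne_zero.mpr fun h0 => ?_
  have hcong := hs.natCast_dilatedCount_prime_mul (p := p) x
  rw [h0, Nat.cast_zero, eq_comm] at hcong
  exact hpV ((ZMod.natCast_eq_zero_iff _ _).mp (pow_eq_zero_iff'.mp hcong).1)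

lemma IsDilatedTiling.of_card_eq_one (hs : IsDilatedTiling V L s) (hV : #V = 1) (t : ℤ) :
    IsDilatedTiling V L t := by
  classical
  obtain ⟨v, rfl⟩ := card_eq_one.mp hV
  have hL : ∀ y, y ∈ L := fun y => by
    by_contra hy
    simpa [dilatedCount, filter_singleton, hy] using hs (y + s • v)
  intro x
  simp [dilatedCount, hL]

lemma IsDilatedTiling.natCast_mul_of_coprime (hs : IsDilatedTiling V L s) {k : ℕ}
    (hk : k.Coprime #V) :
    IsDilatedTiling V L (k * s) := by
  induction k using Nat.recOnMul generalizing s with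
  | zero => exact hs.of_card_eq_one ((Nat.coprime_zero_left _).mp hk) _
  | one => simpa using hs
  | prime p hp => exact hs.prime_mul hp ((Nat.Prime.coprime_iff_not_dvd hp).mp hk)
  | mul a b ha hb =>
    rw [Nat.cast_mul, mul_assoc]
    exact ha (hb hs (Nat.Coprime.coprime_mul_left hk)) (Nat.Coprime.coprime_mul_right hk)

lemma IsDilatedTiling.eq_of_add_smul_sub_mem (hs : IsDilatedTiling V L s) {l v w : G}
    (hl : l ∈ L) (hv : v ∈ V) (hw : w ∈ V) (hvw : l + s • (v - w) ∈ L) : v = w := by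
  classical
  refine card_le_one.mp (hs (l + s • v)).le
    v (mem_filter.mpr ⟨hv, ?_⟩) w (mem_filter.mpr ⟨hw, ?_⟩)
  · rwa [add_sub_cancel_right]
  · rwa [add_sub_assoc, ← smul_sub]

end DilatedTiling

lemma IsTiling.isDilatedTiling_one {n : ℕ} {V : Finset (Fin n → ℤ)} {L : Set (Fin n → ℤ)}
    (hT : IsTiling (↑V) L) : IsDilatedTiling V L 1 := by
  classical
  intro x
  obtain ⟨⟨v, l⟩, ⟨hv, hl, rfl⟩, huniq⟩ := hT x
  refine card_eq_one.mpr ⟨v, ext fun u => ?_⟩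
  simp only [mem_filter, mem_singleton, one_smul]
  constructor
  · rintro ⟨hu, huL⟩
    exact congrArg Prod.fst (huniq (u, v + l - u) ⟨hu, huL, add_sub_cancel _ _⟩)
  · rintro rfl
    simpa using ⟨hv, hl⟩

theorem stmt_4 {n : ℕ} (V : Finset (Fin n → ℤ)) (L : Set (Fin n → ℤ))
    (hT : IsTiling (↑V) L) (a : ℤ) (ha : IsCoprime a (V.card : ℤ)) :
    ∀ l ∈ L, ∀ v ∈ V, ∀ w ∈ V, v ≠ w → l + a • (v - w) ∉ L := by
  intro l hl v hv w hw hvw hlvw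
  have hcop : a.natAbs.Coprime #V := Int.isCoprime_iff_gcd_eq_one.mp ha
  have hk := hT.isDilatedTiling_one.natCast_mul_of_coprime hcop
  rw [mul_one] at hk
  rcases Int.natAbs_eq a with h | h
  · exact hvw (hk.eq_of_add_smul_sub_mem hl hv hw (h ▸ hlvw))
  · refine hvw (hk.eq_of_add_smul_sub_mem hl hw hv ?_).symm
    rwa [h, neg_smul, ← smul_neg, neg_sub] at hlvw
end

section
/- Let V ⊆ Z^n be a finite set of prime cardinality q, and let L ⊆ Z^n be such that {V + l : l ∈ L} tiles Z^n. Then for all v, w ∈ V, the vector q(v - w) is a period of the tiling, i.e., L + q(v - w) = L. -/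
open AddMonoidAlgebra Finset

namespace AddMonoidAlgebra

instance charP {k G : Type*} [CommRing k] [AddMonoid G] (p : ℕ) [CharP k p] :
    CharP (AddMonoidAlgebra k G) p :=
  charP_of_injective_algebraMap' k p

section Convolution

variable {k G : Type*} [Semiring k] [AddCommGroup G]

def convolve (b : AddMonoidAlgebra k G) (f : G → k) : G → k :=
  fun x => b.coeff.sum fun y c => c * f (x - y)

@[simp]
lemma convolve_zero_left (f : G → k) : convolve 0 f = 0 := by
  ext x
  simp [convolve]

@[simp]
lemma convolve_zero_right (b : AddMonoidAlgebra k G) : convolve b 0 = 0 := by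
  ext x
  simp [convolve]

lemma convolve_single_apply (y : G) (c : k) (f : G → k) (x : G) :
    convolve (single y c) f x = c * f (x - y) := by
  simp [convolve]

lemma convolve_add_left (b b' : AddMonoidAlgebra k G) (f : G → k) :
    convolve (b + b') f = convolve b f + convolve b' f := by
  ext x
  simp only [convolve, coeff_add, Pi.add_apply]
  exact Finsupp.sum_add_index' (fun _ => zero_mul _) fun _ _ _ => add_mul _ _ _

lemma convolve_mul (b b' : AddMonoidAlgebra k G) (f : G → k) :
    convolve (b * b') f = convolve b (convolve b' f) := by
  induction b using induction_linear with
  | zero => simp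
  | add b₁ b₂ h₁ h₂ => rw [add_mul, convolve_add_left, convolve_add_left, h₁, h₂]
  | single y c =>
    induction b' using induction_linear with
    | zero =>
      ext x
      simp [convolve_single_apply]
    | add b₁ b₂ h₁ h₂ =>
      ext x
      simp [mul_add, convolve_add_left, h₁, h₂, convolve_single_apply]
    | single z d =>
      ext x
      simp only [single_mul_single, convolve_single_apply, mul_assoc, sub_sub, add_comm y z]

lemma convolve_sum_single_one_apply {ι : Type*} (s : Finset ι) (g : ι → G) (f : G → k)
    (x : G) : convolve (∑ i ∈ s, single (g i) 1) f x = ∑ i ∈ s, f (x - g i) := by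
  simp only [convolve, coeff_sum]
  rw [← Finsupp.sum_finsetSum_index (fun _ => zero_mul _) fun _ _ _ => add_mul _ _ _]
  simp [Finsupp.sum_single_index]

end Convolution

lemma sum_single_one_pow_char {k G : Type*} [CommRing k] [AddCommMonoid G]
    (p : ℕ) [Fact p.Prime] [CharP k p] (V : Finset G) :
    (∑ v ∈ V, single v (1 : k)) ^ p = ∑ v ∈ V, single (p • v) 1 := by
  rw [sum_pow_char]
  simp only [single_pow, one_pow]

end AddMonoidAlgebra

namespace IsTiling

variable {n : ℕ} {V : Finset (Fin n → ℤ)} {L : Set (Fin n → ℤ)}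

lemma card_filter_sub_mem [DecidablePred (· ∈ L)] (hT : IsTiling (↑V) L) (x : Fin n → ℤ) :
    #{v ∈ V | x - v ∈ L} = 1 := by
  obtain ⟨⟨v₀, l₀⟩, ⟨hv₀, hl₀, rfl⟩, huniq⟩ := hT x
  rw [Finset.card_eq_one]
  refine ⟨v₀, Finset.eq_singleton_iff_unique_mem.mpr ⟨?_, ?_⟩⟩
  · simpa using ⟨hv₀, hl₀⟩
  · intro v hv
    rw [Finset.mem_filter] at hv
    exact congrArg Prod.fst (huniq (v, v₀ + l₀ - v) ⟨hv.1, hv.2, add_sub_cancel _ _⟩)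

lemma prime_dvd_card_filter_sub_smul_mem [DecidablePred (· ∈ L)] {q : ℕ} (hq : q.Prime) (hcard : V.card = q)
    (hT : IsTiling (↑V) L) (x : Fin n → ℤ) :
    q ∣ #{v ∈ V | x - (q : ℤ) • v ∈ L} := by
  have : Fact q.Prime := ⟨hq⟩
  set f : (Fin n → ℤ) → ZMod q := L.indicator 1
  set a : AddMonoidAlgebra (ZMod q) (Fin n → ℤ) := ∑ v ∈ V, single v 1 with ha
  have hsum (g : (Fin n → ℤ) → Fin n → ℤ) (y : Fin n → ℤ) :
      ∑ v ∈ V, f (y - g v) = #{v ∈ V | y - g v ∈ L} := by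
    simp only [f, Set.indicator_apply, Pi.one_apply, Finset.sum_boole]
  have htile : convolve a f = 1 := by
    ext y
    rw [ha, convolve_sum_single_one_apply, hsum (fun v => v) y, card_filter_sub_mem hT,
      Nat.cast_one, Pi.one_apply]
  have hconst : convolve a 1 = 0 := by
    ext y
    simp [ha, convolve_sum_single_one_apply, hcard]
  have hpow : convolve (a ^ q) f = 0 := by
    calc convolve (a ^ q) f = convolve (a ^ (q - 2) * a * a) f := by
          rw [← pow_succ, ← pow_succ, Nat.sub_add_cancel hq.two_le]
      _ = 0 := by rw [convolve_mul, convolve_mul, htile, hconst, convolve_zero_right]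
  have hx := congrFun hpow x
  rw [sum_single_one_pow_char, convolve_sum_single_one_apply] at hx
  simp only [← Nat.cast_smul_eq_nsmul ℤ, hsum (fun v => (q : ℤ) • v), Pi.zero_apply] at hx
  exact (ZMod.natCast_eq_zero_iff _ q).mp hx

lemma sub_smul_mem_of_sub_smul_mem {q : ℕ} (hq : q.Prime) (hcard : V.card = q)
    (hT : IsTiling (↑V) L) {x v w : Fin n → ℤ} (hv : v ∈ V) (hw : w ∈ V)
    (hx : x - (q : ℤ) • v ∈ L) : x - (q : ℤ) • w ∈ L := by
  classical
  have hdvd := hT.prime_dvd_card_filter_sub_smul_mem hq hcard x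
  have hpos : 0 < #{v ∈ V | x - (q : ℤ) • v ∈ L} :=
    Finset.card_pos.mpr ⟨v, Finset.mem_filter.mpr ⟨hv, hx⟩⟩
  have hfull : #{v ∈ V | x - (q : ℤ) • v ∈ L} = #V :=
    le_antisymm (card_filter_le _ _) (by rw [hcard]; exact Nat.le_of_dvd hpos hdvd)
  exact Finset.filter_card_eq hfull w hw

lemma add_smul_sub_mem {q : ℕ} (hq : q.Prime) (hcard : V.card = q)
    (hT : IsTiling (↑V) L) {l v w : Fin n → ℤ} (hl : l ∈ L) (hv : v ∈ V) (hw : w ∈ V) :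
    l + (q : ℤ) • (v - w) ∈ L := by
  have h := hT.sub_smul_mem_of_sub_smul_mem hq hcard (x := l + (q : ℤ) • v) hv hw
    (by rwa [add_sub_cancel_right])
  rwa [smul_sub, ← add_sub_assoc]

end IsTiling

theorem stmt_5 {n : ℕ} (V : Finset (Fin n → ℤ)) (L : Set (Fin n → ℤ))
    (q : ℕ) (hq : q.Prime) (hcard : V.card = q)
    (hT : IsTiling (↑V) L) :
    ∀ v ∈ V, ∀ w ∈ V, (fun x => x + (q : ℤ) • (v - w)) '' L = L := by
  intro v hv w hw
  ext y
  constructor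
  · rintro ⟨l, hl, rfl⟩
    exact hT.add_smul_sub_mem hq hcard hl hv hw
  · intro hy
    refine ⟨y + (q : ℤ) • (w - v), hT.add_smul_sub_mem hq hcard hy hw hv, ?_⟩
    simp only [smul_sub]
    abel
end

section
/- Let V ⊆ Z^n be a finite set of prime cardinality q containing 0, and let L be a translate set for a tiling of Z^n by V. Then for every x ∈ Z^n and every v, w ∈ V: x ∈ L if and only if x + q(v - w) ∈ L. -/
section Necklace

open Multiplicative

variable {p : ℕ} {α : Type*}

abbrev rotationAction (S : Set (ZMod p → α)) (hS : ∀ t ∈ S, ∀ k, (fun i => t (i + k)) ∈ S) :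
    MulAction (Multiplicative (ZMod p)) S where
  smul k t := ⟨fun i => t.1 (i + toAdd k), hS t.1 t.2 (toAdd k)⟩
  one_smul t := Subtype.ext <| funext fun i =>
    show t.1 (i + toAdd 1) = t.1 i by rw [toAdd_one, add_zero]
  mul_smul k l t := Subtype.ext <| funext fun i =>
    show t.1 (i + toAdd (k * l)) = t.1 (i + toAdd k + toAdd l) by
      rw [toAdd_mul, add_assoc]

theorem card_modEq_card_const [Fact p.Prime] [Finite α] (S : Set (ZMod p → α))
    (hS : ∀ t ∈ S, ∀ k, (fun i => t (i + k)) ∈ S) :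
    Nat.card S ≡ Nat.card {a : α // (fun _ => a) ∈ S} [MOD p] := by
  let _ := rotationAction S hS
  have hG : IsPGroup p (Multiplicative (ZMod p)) :=
    .of_card (n := 1) (by rw [Nat.card_congr toAdd, Nat.card_zmod, pow_one])
  have hconst (t : MulAction.fixedPoints (Multiplicative (ZMod p)) S) (i : ZMod p) :
      t.1.1 i = t.1.1 0 := by
    have h := congrFun (congrArg Subtype.val (t.2 (ofAdd i))) 0
    rwa [← zero_add i]
  have e : MulAction.fixedPoints (Multiplicative (ZMod p)) S ≃ {a : α // (fun _ => a) ∈ S} :=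
    { toFun := fun t => ⟨t.1.1 0, by convert t.1.2 using 1; exact (funext (hconst t)).symm⟩
      invFun := fun a => ⟨⟨fun _ => a.1, a.2⟩, fun _ => rfl⟩
      left_inv := fun t => Subtype.ext <| Subtype.ext <| funext fun i => (hconst t i).symm
      right_inv := fun _ => rfl }
  exact (hG.card_modEq_card_fixedPoints S).trans (by rw [Nat.card_congr e])

end Necklace

namespace IsTiling

variable {n : ℕ} {V L : Set (Fin n → ℤ)}

theorem existsUnique_sub_mem (hT : IsTiling V L) (z : Fin n → ℤ) :
    ∃! a, a ∈ V ∧ z - a ∈ L := by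
  obtain ⟨⟨a, l⟩, ⟨ha, hl, rfl⟩, huniq⟩ := hT z
  refine ⟨a, ⟨ha, by simpa⟩, fun b ⟨hb, hbl⟩ => ?_⟩
  exact congrArg Prod.fst (huniq (b, a + l - b) ⟨hb, hbl, add_sub_cancel b _⟩)

theorem card_tuples_sub_sum_mem (hT : IsTiling V L) {ι : Type*} [Fintype ι] [DecidableEq ι]
    (i₀ : ι) (y : Fin n → ℤ) :
    Nat.card {t : ι → V // y - ∑ i, (t i : Fin n → ℤ) ∈ L} =
      Nat.card V ^ (Fintype.card ι - 1) := by
  let restrict (t : ι → V) (j : {j // j ≠ i₀}) : V := t j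
  let restSum (r : {j // j ≠ i₀} → V) : Fin n → ℤ := ∑ j, (r j : Fin n → ℤ)
  have hsum (t : ι → V) : y - ∑ i, (t i : Fin n → ℤ) = y - restSum (restrict t) - t i₀ := by
    rw [Fintype.sum_eq_add_sum_subtype_ne _ i₀, sub_add_eq_sub_sub_swap]
  have hbij : Function.Bijective
      fun t : {t : ι → V // y - ∑ i, (t i : Fin n → ℤ) ∈ L} => restrict t.1 := by
    constructor
    · rintro ⟨t, ht⟩ ⟨t', ht'⟩ (h : restrict t = restrict t')
      rw [hsum] at ht ht'
      rw [h] at ht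
      have h₀ : (t i₀ : Fin n → ℤ) = t' i₀ :=
        (hT.existsUnique_sub_mem _).unique ⟨(t i₀).2, ht⟩ ⟨(t' i₀).2, ht'⟩
      refine Subtype.ext <| funext fun i => ?_
      by_cases hi : i = i₀
      · subst hi; exact Subtype.ext h₀
      · exact congrFun h ⟨i, hi⟩
    · intro r
      obtain ⟨a, ⟨ha, haL⟩, -⟩ := hT.existsUnique_sub_mem (y - restSum r)
      let t (i : ι) : V := if h : i = i₀ then ⟨a, ha⟩ else r ⟨i, h⟩
      have ht : restrict t = r := funext fun j => dif_neg j.2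
      refine ⟨⟨t, ?_⟩, ht⟩
      rwa [hsum, ht, show t i₀ = ⟨a, ha⟩ from dif_pos rfl]
  rw [Nat.card_congr (Equiv.ofBijective _ hbij), Nat.card_fun,
    Nat.card_eq_fintype_card (α := {j // j ≠ i₀})]
  simp

theorem dvd_card_smul_sub_mem (hT : IsTiling V L) {q : ℕ} (hq : q.Prime)
    (hcard : Nat.card V = q) (y : Fin n → ℤ) :
    q ∣ Nat.card {a : V // y - (q : ℤ) • (a : Fin n → ℤ) ∈ L} := by
  have := Fact.mk hq
  have : Finite V := Nat.finite_of_card_ne_zero (hcard ▸ hq.ne_zero)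
  let S : Set (ZMod q → V) := {t | y - ∑ i, (t i : Fin n → ℤ) ∈ L}
  have hS : ∀ t ∈ S, ∀ k, (fun i => t (i + k)) ∈ S := fun t ht k => by
    show y - ∑ i, (t (i + k) : Fin n → ℤ) ∈ L
    rwa [Fintype.sum_equiv (Equiv.addRight k) (fun i => (t (i + k) : Fin n → ℤ))
      (fun i => (t i : Fin n → ℤ)) fun _ => rfl]
  have hconst (a : V) : (fun _ => a) ∈ S ↔ y - (q : ℤ) • (a : Fin n → ℤ) ∈ L := by
    show y - ∑ _ : ZMod q, (a : Fin n → ℤ) ∈ L ↔ _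
    rw [Finset.sum_const, Finset.card_univ, ZMod.card, natCast_zsmul]
  have hS_card : Nat.card S = q ^ (q - 1) :=
    (hT.card_tuples_sub_sum_mem 0 y).trans (by rw [ZMod.card, hcard])
  have hmod := card_modEq_card_const S hS
  rw [hS_card, Nat.card_congr (Equiv.subtypeEquivRight hconst)] at hmod
  exact (hmod.dvd_iff dvd_rfl).mp (dvd_pow_self q (Nat.sub_ne_zero_of_lt hq.one_lt))

theorem smul_sub_mem_iff (hT : IsTiling V L) {q : ℕ} (hq : q.Prime)
    (hcard : Nat.card V = q) {y v w : Fin n → ℤ} (hv : v ∈ V) (hw : w ∈ V) :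
    y - (q : ℤ) • v ∈ L ↔ y - (q : ℤ) • w ∈ L := by
  suffices ∀ {v w}, v ∈ V → w ∈ V → y - (q : ℤ) • v ∈ L → y - (q : ℤ) • w ∈ L from
    ⟨this hv hw, this hw hv⟩
  intro v w hv hw h
  have : Finite V := Nat.finite_of_card_ne_zero (hcard ▸ hq.ne_zero)
  by_contra hw'
  have hlt := Finite.card_subtype_lt (p := fun a : V => y - (q : ℤ) • (a : Fin n → ℤ) ∈ L)
    (x := ⟨w, hw⟩) hw'
  have : Nonempty {a : V // y - (q : ℤ) • (a : Fin n → ℤ) ∈ L} := ⟨⟨⟨v, hv⟩, h⟩⟩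
  have hle := Nat.le_of_dvd Nat.card_pos (hT.dvd_card_smul_sub_mem hq hcard y)
  omega

end IsTiling

theorem stmt_6_general {n : ℕ} (V : Finset (Fin n → ℤ)) (L : Set (Fin n → ℤ))
    (q : ℕ) (hq : q.Prime) (hcard : V.card = q) (hT : IsTiling (↑V) L) :
    ∀ x : Fin n → ℤ, ∀ v ∈ V, ∀ w ∈ V, (x ∈ L ↔ x + (q : ℤ) • (v - w) ∈ L) := by
  intro x v hv w hw
  have hcard' : Nat.card (V : Set (Fin n → ℤ)) = q := by simpa using hcard
  have key := hT.smul_sub_mem_iff hq hcard' (y := x + (q : ℤ) • v) hv hw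
  rwa [add_sub_cancel_right, add_sub_assoc, ← smul_sub] at key

theorem stmt_6 {n : ℕ} (V : Finset (Fin n → ℤ)) (L : Set (Fin n → ℤ))
    (q : ℕ) (hq : q.Prime) (hcard : V.card = q) (h0 : (0 : Fin n → ℤ) ∈ V)
    (hT : IsTiling (↑V) L) :
    ∀ x : Fin n → ℤ, ∀ v ∈ V, ∀ w ∈ V, (x ∈ L ↔ x + (q : ℤ) • (v - w) ∈ L) :=
  stmt_6_general V L q hq hcard hT
end

section
/- Let q be a prime, V = {0, v_1, ..., v_{q-1}} ⊆ Z^n with the v_i generating Z^n, and let φ : Z^{q-1} → Z^n be the surjective homomorphism sending e_i to v_i. If L ⊆ Z^n is a translate set for a tiling of Z^n by V, then φ^{-1}(L) is a translate set for a tiling of Z^{q-1} by the semi-cross {0, e_1, ..., e_{q-1}}. -/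
/-- The semi-cross `{0, e_1, …, e_m}` in `ℤ^m`. -/
def semicross (m : ℕ) : Set (Fin m → ℤ) :=
  insert 0 (Set.range fun i : Fin m => Pi.single i 1)

/-! A tiling pulls back along a homomorphism `φ` that maps the new tile bijectively onto the old
one: the decomposition `φ x = φ s + l` lifts to `x = s + (x - s)`, and two lifts of `x` have
the same image decomposition, hence the same tile element by injectivity on `S`. -/

theorem IsTiling.preimage {m n : ℕ} {V L : Set (Fin n → ℤ)} (hT : IsTiling V L)
    {S : Set (Fin m → ℤ)} {φ : (Fin m → ℤ) →+ (Fin n → ℤ)} (hS : Set.BijOn φ S V) :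
    IsTiling S (φ ⁻¹' L) := by
  intro x
  obtain ⟨⟨w, l⟩, ⟨hw, hl, hwl⟩, huniq⟩ := hT (φ x)
  obtain ⟨s, hs, rfl⟩ := hS.surjOn hw
  have hl' : φ (x - s) = l := by rw [map_sub, ← hwl, add_sub_cancel_left]
  refine ⟨(s, x - s), ⟨hs, by simpa [hl'] using hl, add_sub_cancel s x⟩, ?_⟩
  rintro ⟨s', y⟩ ⟨hs', hy, rfl⟩
  have himage := huniq (φ s', φ y) ⟨hS.mapsTo hs', hy, (map_add φ s' y).symm⟩
  obtain rfl : s' = s := hS.injOn hs' hs (congrArg Prod.fst himage)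
  simp

theorem bijOn_semicross {m n : ℕ} {v : Fin m → (Fin n → ℤ)} (hinj : Function.Injective v)
    (h0 : (0 : Fin n → ℤ) ∉ Set.range v) {φ : (Fin m → ℤ) →+ (Fin n → ℤ)}
    (hφ : ∀ i, φ (Pi.single i 1) = v i) :
    Set.BijOn φ (semicross m) (insert 0 (Set.range v)) := by
  refine ⟨?_, ?_, ?_⟩
  · rintro _ (rfl | ⟨i, rfl⟩)
    · simp
    · exact Set.mem_insert_of_mem _ ⟨i, (hφ i).symm⟩
  · rintro _ (rfl | ⟨i, rfl⟩) _ (rfl | ⟨j, rfl⟩) h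
    · rfl
    · exact absurd ⟨j, by simpa [hφ] using h.symm⟩ h0
    · exact absurd ⟨i, by simpa [hφ] using h⟩ h0
    · rw [hinj (by simpa [hφ] using h : v i = v j)]
  · rintro _ (rfl | ⟨i, rfl⟩)
    · exact ⟨0, Set.mem_insert _ _, map_zero φ⟩
    · exact ⟨Pi.single i 1, Set.mem_insert_of_mem _ ⟨i, rfl⟩, hφ i⟩

theorem stmt_12_general {n : ℕ} (q : ℕ) (v : Fin (q - 1) → (Fin n → ℤ))
    (hinj : Function.Injective v) (h0 : (0 : Fin n → ℤ) ∉ Set.range v)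
    (φ : (Fin (q - 1) → ℤ) →+ (Fin n → ℤ))
    (hφ : ∀ i : Fin (q - 1), φ (Pi.single i 1) = v i)
    (L : Set (Fin n → ℤ)) (hT : IsTiling (insert 0 (Set.range v)) L) :
    IsTiling (semicross (q - 1)) (φ ⁻¹' L) :=
  hT.preimage (bijOn_semicross hinj h0 hφ)

theorem stmt_12 {n : ℕ} (q : ℕ) (hq : q.Prime) (v : Fin (q - 1) → (Fin n → ℤ))
    (hinj : Function.Injective v) (h0 : (0 : Fin n → ℤ) ∉ Set.range v)
    (hgen : AddSubgroup.closure (Set.range v) = ⊤)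
    (φ : (Fin (q - 1) → ℤ) →+ (Fin n → ℤ))
    (hφ : ∀ i : Fin (q - 1), φ (Pi.single i 1) = v i)
    (L : Set (Fin n → ℤ)) (hT : IsTiling (insert 0 (Set.range v)) L) :
    IsTiling (semicross (q - 1)) (φ ⁻¹' L) :=
  stmt_12_general q v hinj h0 φ hφ L hT
end

section
/- For each odd prime q, there exists a cyclic lattice tiling of Z^{q-1} by the semi-cross V = {0, e_1, ..., e_{q-1}}: namely, if t is a primitive root modulo q and φ : Z^{q-1} → Z/qZ is the homomorphism with φ(e_i) = t^{i-1}, then L = ker(φ) is a translate set for a tiling, and L is closed under the cyclic shift of coordinates π(a_1, ..., a_{q-1}) = (a_2, ..., a_{q-1}, a_1). -/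
/-! The homomorphism `φ` maps the semicross bijectively onto `ZMod q`: `0 ↦ 0`, and since `t` has
order `q - 1`, the images `t ^ i` of the unit vectors run through the nonzero residues exactly once.
Hence every `x` is uniquely `v + l` with `φ v = φ x` and `l ∈ ker φ`. Because `t ^ (q - 1) = 1`,
the cyclic shift multiplies `φ` by `t⁻¹`, so it preserves the kernel. -/

theorem isTiling_ker_of_bijOn {n : ℕ} {G : Type*} [AddGroup G] {V : Set (Fin n → ℤ)}
    (φ : (Fin n → ℤ) →+ G) (hV : Set.BijOn φ V Set.univ) : IsTiling V φ.ker := by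
  intro x
  obtain ⟨v, hv, hvx⟩ := hV.surjOn (Set.mem_univ (φ x))
  refine ⟨(v, -v + x), ⟨hv, by simp [hvx], add_neg_cancel_left v x⟩, ?_⟩
  rintro ⟨w, l⟩ ⟨hw, hl, rfl⟩
  have hwv : w = v := hV.injOn hw hv (by simpa [(AddMonoidHom.mem_ker).mp hl] using hvx.symm)
  simp [hwv]

theorem AddMonoidHom.map_pi_eq_sum_smul {ι M : Type*} [Fintype ι] [DecidableEq ι]
    [AddCommGroup M] (φ : (ι → ℤ) →+ M) (a : ι → ℤ) :
    φ a = ∑ i, a i • φ (Pi.single i 1) := by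
  conv_lhs => rw [pi_eq_sum_univ' a]
  simp only [map_sum, map_zsmul]

theorem ne_zero_of_forall_ne_zero_exists_pow {R : Type*} [Ring R] (hR : (-1 : R) ≠ 1) {t : R}
    (ht : ∀ a : R, a ≠ 0 → ∃ k : ℕ, t ^ k = a) : t ≠ 0 := by
  have : Nontrivial R := ⟨_, _, hR⟩
  rintro rfl
  obtain ⟨k, hk⟩ := ht (-1) (neg_ne_zero.mpr one_ne_zero)
  rcases k with _ | k
  · exact hR (by simpa using hk.symm)
  · simp at hk

theorem isPrimitiveRoot_of_forall_ne_zero_exists_pow {K : Type*} [CommGroupWithZero K] {t : K}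
    (ht0 : t ≠ 0) (ht : ∀ a : K, a ≠ 0 → ∃ k : ℕ, t ^ k = a) :
    IsPrimitiveRoot t (Nat.card K - 1) := by
  have hgen : ∀ u : Kˣ, u ∈ Subgroup.zpowers (Units.mk0 t ht0) := fun u => by
    obtain ⟨k, hk⟩ := ht u u.ne_zero
    exact ⟨k, Units.ext (by simpa using hk)⟩
  rw [IsPrimitiveRoot.iff_orderOf, ← Nat.card_units, ← orderOf_eq_card_of_forall_mem_zpowers hgen,
    ← orderOf_units, Units.val_mk0]

theorem bijOn_semicross_s18 {K : Type*} [Field K] [Finite K] {m : ℕ} (hK : Nat.card K = m + 1)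
    {ζ : K} (hζ : IsPrimitiveRoot ζ m) (φ : (Fin m → ℤ) →+ K)
    (hφ : ∀ i : Fin m, φ (Pi.single i 1) = ζ ^ (i : ℕ)) :
    Set.BijOn φ (semicross m) Set.univ := by
  have hm : m ≠ 0 := by have := Finite.one_lt_card (α := K); omega
  have : NeZero m := ⟨hm⟩
  have hζ0 : ∀ i : Fin m, φ (Pi.single i 1) ≠ 0 := fun i => by
    rw [hφ]; exact pow_ne_zero _ (hζ.ne_zero hm)
  refine ⟨Set.mapsTo_univ _ _, ?_, ?_⟩
  · rintro v (rfl | ⟨i, rfl⟩) w (rfl | ⟨j, rfl⟩) h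
    · rfl
    · exact absurd (by simpa using h.symm) (hζ0 j)
    · exact absurd (by simpa using h) (hζ0 i)
    · rw [hφ, hφ] at h
      rw [Fin.ext (hζ.pow_inj i.isLt j.isLt h)]
  · intro c _
    by_cases hc : c = 0
    · exact ⟨0, Set.mem_insert _ _, by simp [hc]⟩
    have : Fintype K := Fintype.ofFinite K
    have hcm : c ^ m = 1 := by
      rw [← FiniteField.pow_card_sub_one_eq_one c hc, ← Nat.card_eq_fintype_card, hK,
        Nat.add_sub_cancel]
    obtain ⟨i, hi, rfl⟩ := hζ.eq_pow_of_pow_eq_one hcm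
    exact ⟨Pi.single (⟨i, hi⟩ : Fin m) 1, Set.mem_insert_of_mem _ ⟨_, rfl⟩, hφ _⟩

theorem mul_map_rotate {R : Type*} [CommRing R] {m : ℕ} (hm : 0 < m) {ζ : R} (hζ : ζ ^ m = 1)
    (φ : (Fin m → ℤ) →+ R) (hφ : ∀ i : Fin m, φ (Pi.single i 1) = ζ ^ (i : ℕ))
    (a : Fin m → ℤ) :
    ζ * φ (fun i => a ⟨((i : ℕ) + 1) % m, Nat.mod_lt _ hm⟩) = φ a := by
  obtain ⟨n, rfl⟩ : ∃ n, m = n + 1 := ⟨m - 1, by omega⟩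
  have hrot : (fun i : Fin (n + 1) => a ⟨((i : ℕ) + 1) % (n + 1), Nat.mod_lt _ hm⟩)
      = a ∘ finRotate (n + 1) := by
    ext i; congr 1; ext; simp [Fin.val_add]
  rw [hrot, φ.map_pi_eq_sum_smul, φ.map_pi_eq_sum_smul, Finset.mul_sum,
    ← Equiv.sum_comp (finRotate (n + 1)) (fun j => a j • φ (Pi.single j 1))]
  refine Finset.sum_congr rfl fun i _ => ?_
  rw [hφ, hφ, mul_smul_comm, ← pow_succ', pow_eq_pow_mod _ hζ]
  simp [Fin.val_add]

theorem stmt_18 (q : ℕ) (hq : q.Prime) (hodd : Odd q)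
    (t : ZMod q) (ht : ∀ a : ZMod q, a ≠ 0 → ∃ k : ℕ, t ^ k = a)
    (φ : (Fin (q - 1) → ℤ) →+ ZMod q)
    (hφ : ∀ i : Fin (q - 1), φ (Pi.single i 1) = t ^ (i : ℕ)) :
    IsTiling (semicross (q - 1)) (φ.ker : Set (Fin (q - 1) → ℤ)) ∧
      ∀ a : Fin (q - 1) → ℤ, a ∈ φ.ker →
        (fun i : Fin (q - 1) =>
          a ⟨((i : ℕ) + 1) % (q - 1), Nat.mod_lt _ (by have := hq.two_le; omega)⟩) ∈ φ.ker := by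
  have : Fact q.Prime := ⟨hq⟩
  have : Fact (2 < q) := ⟨by obtain ⟨k, rfl⟩ := hodd; have := hq.two_le; omega⟩
  have hq1 : 0 < q - 1 := by have := hq.two_le; omega
  have ht0 : t ≠ 0 := ne_zero_of_forall_ne_zero_exists_pow ZMod.neg_one_ne_one ht
  have hprim : IsPrimitiveRoot t (q - 1) := by
    simpa only [Nat.card_zmod] using isPrimitiveRoot_of_forall_ne_zero_exists_pow ht0 ht
  have hcard : Nat.card (ZMod q) = q - 1 + 1 := by rw [Nat.card_zmod]; omega
  refine ⟨isTiling_ker_of_bijOn φ (bijOn_semicross_s18 hcard hprim φ hφ), fun a ha => ?_⟩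
  have hrot := mul_map_rotate hq1 hprim.pow_eq_one φ hφ a
  rw [(AddMonoidHom.mem_ker).mp ha] at hrot
  exact (mul_eq_zero.mp hrot).resolve_left ht0
end
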